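/- Let Σ₁, Σ₂ be positive definite p×p real matrices, n₁, n₂ > 0 real numbers, and μ ∈ R^p a nonzero vector. For a positive definite p×p matrix A, define Δ(A) = ‖A^{1/2}μ‖² and K₂(A) = 4·(A^{1/2}μ)^T A^{1/2}(Σ₁/n₁ + Σ₂/n₂)A^{1/2}(A^{1/2}μ). Then for every positive definite A, Δ(A)/√(K₂(A)) ≤ Δ(A⋆)/√(K₂(A⋆)) where A⋆ = c(Σ₁/n₁ + Σ₂/n₂)^{-1} for any constant c > 0; moreover the maximum value equals (1/2)·√(μ^T(Σ₁/n₁ + Σ₂/n₂)^{-1}μ). -/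

import Mathlib

/-!
Write `S = Σ₁/n₁ + Σ₂/n₂`. Since `A^{1/2}` is symmetric, `Δ(A) = μᵀAμ` and
`K₂(A) = 4 (Aμ)ᵀS(Aμ)`. Cauchy–Schwarz for the inner product `⟨x, y⟩_S = xᵀSy` gives
`(μᵀAμ)² = ⟨Aμ, S⁻¹μ⟩_S² ≤ ⟨Aμ, Aμ⟩_S ⟨S⁻¹μ, S⁻¹μ⟩_S = (Aμ)ᵀS(Aμ) · μᵀS⁻¹μ`,
that is `Δ(A)/√(K₂(A)) ≤ ½√(μᵀS⁻¹μ)`, with equality when `Aμ` is a positive multiple of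
`S⁻¹μ`, in particular for `A = cS⁻¹`.
-/

open Matrix

open scoped ComplexOrder in
/-- The square root of a positive semidefinite matrix, as `Matrix.PosSemidef.sqrt` was defined
in Mathlib (December 2024); the definition has since been removed from Mathlib. -/
noncomputable def Matrix.PosSemidef.sqrt {n : Type*} [Fintype n] [DecidableEq n] {𝕜 : Type*}
    [RCLike 𝕜] {A : Matrix n n 𝕜} (hA : A.PosSemidef) : Matrix n n 𝕜 :=
  hA.1.eigenvectorUnitary.1 * diagonal ((↑) ∘ (√·) ∘ hA.1.eigenvalues) *
    (star hA.1.eigenvectorUnitary : Matrix n n 𝕜)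

namespace Matrix.PosSemidef

open scoped ComplexOrder

variable {n 𝕜 : Type*} [Fintype n] [DecidableEq n] [RCLike 𝕜] {A : Matrix n n 𝕜}

lemma isHermitian_sqrt (hA : A.PosSemidef) : hA.sqrt.IsHermitian := by
  unfold Matrix.PosSemidef.sqrt
  rw [star_eq_conjTranspose]
  exact isHermitian_mul_mul_conjTranspose _ (isHermitian_diagonal_of_self_adjoint _
    (by ext i; simp [Pi.star_apply]))

lemma sqrt_mul_self (hA : A.PosSemidef) : hA.sqrt * hA.sqrt = A := by
  set U := hA.1.eigenvectorUnitary
  set D : Matrix n n 𝕜 := diagonal ((↑) ∘ (√·) ∘ hA.1.eigenvalues)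
  have hU : (star U : Matrix n n 𝕜) * U = 1 := Unitary.coe_star_mul_self _
  have hD : D * D = diagonal ((↑) ∘ hA.1.eigenvalues) := by
    rw [diagonal_mul_diagonal]
    congr 1
    funext i
    simp [← RCLike.ofReal_mul, Real.mul_self_sqrt (hA.eigenvalues_nonneg i)]
  conv_rhs => rw [hA.1.spectral_theorem, Unitary.conjStarAlgAut_apply]
  calc hA.sqrt * hA.sqrt = U * (D * ((star U : Matrix n n 𝕜) * U) * D) *
      star (U : Matrix n n 𝕜) := by
        simp only [Matrix.PosSemidef.sqrt, U, D, Matrix.mul_assoc]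
    _ = _ := by rw [hU, Matrix.mul_one, hD]

lemma isSymm_sqrt {A : Matrix n n ℝ} (hA : A.PosSemidef) : hA.sqrt.IsSymm :=
  isHermitian_iff_isSymm.mp hA.isHermitian_sqrt

end Matrix.PosSemidef

namespace Matrix

variable {n : Type*} [Fintype n]

lemma IsSymm.mulVec_dotProduct {R : Type*} [CommSemiring R] {B : Matrix n n R} (hB : B.IsSymm)
    (u v : n → R) : (B *ᵥ u) ⬝ᵥ v = u ⬝ᵥ (B *ᵥ v) := by
  rw [dotProduct_mulVec, ← mulVec_transpose, hB.eq]

lemma sq_dotProduct_le {R : Type*} [CommRing R] [LinearOrder R] [IsStrictOrderedRing R]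
    (u v : n → R) : (u ⬝ᵥ v) ^ 2 ≤ (u ⬝ᵥ u) * (v ⬝ᵥ v) := by
  simpa only [dotProduct, sq] using Finset.sum_mul_sq_le_sq_mul_sq Finset.univ u v

lemma sq_dotProduct_le_of_posDef [DecidableEq n] {S : Matrix n n ℝ} (hS : S.PosDef)
    (u v : n → ℝ) : (u ⬝ᵥ v) ^ 2 ≤ (u ⬝ᵥ (S *ᵥ u)) * (v ⬝ᵥ (S⁻¹ *ᵥ v)) := by
  set R := hS.posSemidef.sqrt
  have hR : R.IsSymm := hS.posSemidef.isSymm_sqrt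
  have hRR : R * R = S := hS.posSemidef.sqrt_mul_self
  have hR_inner (x y : n → ℝ) : (R *ᵥ x) ⬝ᵥ (R *ᵥ y) = x ⬝ᵥ (S *ᵥ y) := by
    rw [hR.mulVec_dotProduct, mulVec_mulVec, hRR]
  have hS_inv : S *ᵥ (S⁻¹ *ᵥ v) = v := by
    rw [mulVec_mulVec, mul_nonsing_inv S ((isUnit_iff_isUnit_det S).mp hS.isUnit), one_mulVec]
  have h := sq_dotProduct_le (R *ᵥ u) (R *ᵥ (S⁻¹ *ᵥ v))
  rwa [hR_inner, hR_inner, hR_inner, hS_inv, dotProduct_comm (S⁻¹ *ᵥ v)] at h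

end Matrix

section DeltaRatio

variable {n : Type*} [Fintype n]

/-- `Δ(A)/√(K₂(A))` for `A = B²` and `S = Σ₁/n₁ + Σ₂/n₂`. -/
noncomputable def deltaRatio (S B : Matrix n n ℝ) (μ : n → ℝ) : ℝ :=
  ((B *ᵥ μ) ⬝ᵥ (B *ᵥ μ)) / √(4 * ((B *ᵥ μ) ⬝ᵥ ((B * S * B) *ᵥ (B *ᵥ μ))))

lemma deltaRatio_eq_of_isSymm {S B : Matrix n n ℝ} (hB : B.IsSymm) (μ : n → ℝ) :
    deltaRatio S B μ =
      μ ⬝ᵥ ((B * B) *ᵥ μ) / (2 * √(((B * B) *ᵥ μ) ⬝ᵥ (S *ᵥ ((B * B) *ᵥ μ)))) := by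
  have hnum : (B *ᵥ μ) ⬝ᵥ (B *ᵥ μ) = μ ⬝ᵥ ((B * B) *ᵥ μ) := by
    rw [hB.mulVec_dotProduct, mulVec_mulVec]
  have hden : (B *ᵥ μ) ⬝ᵥ ((B * S * B) *ᵥ (B *ᵥ μ)) =
      ((B * B) *ᵥ μ) ⬝ᵥ (S *ᵥ ((B * B) *ᵥ μ)) := by
    rw [← mulVec_mulVec, ← mulVec_mulVec, ← mulVec_mulVec, ← hB.mulVec_dotProduct]
  have hsqrt4 (x : ℝ) : √(4 * x) = 2 * √x := by
    rw [Real.sqrt_mul (by norm_num), show (4 : ℝ) = 2 ^ 2 by norm_num, Real.sqrt_sq (by norm_num)]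
  rw [deltaRatio, hnum, hden, hsqrt4]

lemma deltaRatio_le [DecidableEq n] {S B : Matrix n n ℝ} (hS : S.PosDef) (hB : B.IsSymm)
    (μ : n → ℝ) :
    deltaRatio S B μ ≤ 1 / 2 * √(μ ⬝ᵥ (S⁻¹ *ᵥ μ)) := by
  rw [deltaRatio_eq_of_isSymm hB]
  set a := (B * B) *ᵥ μ
  have hr : 0 ≤ a ⬝ᵥ (S *ᵥ a) := by
    simpa using hS.posSemidef.dotProduct_mulVec_nonneg a
  have hq : μ ⬝ᵥ a ≤ √(a ⬝ᵥ (S *ᵥ a)) * √(μ ⬝ᵥ (S⁻¹ *ᵥ μ)) := by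
    rw [← Real.sqrt_mul hr, dotProduct_comm]
    exact (le_abs_self _).trans (Real.abs_le_sqrt (sq_dotProduct_le_of_posDef hS a μ))
  exact div_le_of_le_mul₀ (by positivity) (by positivity) (hq.trans_eq (by ring))

lemma deltaRatio_eq_of_mul_self_eq_smul_inv [DecidableEq n] {S B : Matrix n n ℝ}
    (hS : IsUnit S.det) (hB : B.IsSymm) {c : ℝ} (hc : 0 < c) (hBB : B * B = c • S⁻¹) (μ : n → ℝ) :
    deltaRatio S B μ = 1 / 2 * √(μ ⬝ᵥ (S⁻¹ *ᵥ μ)) := by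
  rw [deltaRatio_eq_of_isSymm hB, hBB]
  simp only [smul_mulVec, mulVec_smul, dotProduct_smul, smul_dotProduct, mulVec_mulVec,
    mul_nonsing_inv _ hS, one_mulVec, smul_eq_mul, dotProduct_comm (S⁻¹ *ᵥ μ) μ]
  set t := μ ⬝ᵥ (S⁻¹ *ᵥ μ)
  rw [← mul_assoc, Real.sqrt_mul (mul_self_nonneg c), Real.sqrt_mul_self hc.le, mul_comm 2,
    mul_assoc, mul_div_mul_left _ _ hc.ne', ← div_div, Real.div_sqrt]
  ring

end DeltaRatio

theorem ratio_maximized_by_inverse_combination_general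
    (p : ℕ) (n₁ n₂ : ℝ) (hn₁ : 0 < n₁) (hn₂ : 0 < n₂)
    (Sig₁ Sig₂ : Matrix (Fin p) (Fin p) ℝ)
    (hSig₁ : Sig₁.PosDef) (hSig₂ : Sig₂.PosDef)
    (μ : Fin p → ℝ) (c : ℝ) (hc : 0 < c) :
    ∀ hAstar : ((c • (n₁⁻¹ • Sig₁ + n₂⁻¹ • Sig₂)⁻¹ : Matrix (Fin p) (Fin p) ℝ)).PosSemidef,
      (∀ (A : Matrix (Fin p) (Fin p) ℝ) (hA : A.PosDef),
        ((hA.posSemidef.sqrt *ᵥ μ) ⬝ᵥ (hA.posSemidef.sqrt *ᵥ μ)) /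
            Real.sqrt (4 * ((hA.posSemidef.sqrt *ᵥ μ) ⬝ᵥ
              ((hA.posSemidef.sqrt * (n₁⁻¹ • Sig₁ + n₂⁻¹ • Sig₂) * hA.posSemidef.sqrt) *ᵥ
                (hA.posSemidef.sqrt *ᵥ μ))))
          ≤ ((hAstar.sqrt *ᵥ μ) ⬝ᵥ (hAstar.sqrt *ᵥ μ)) /
            Real.sqrt (4 * ((hAstar.sqrt *ᵥ μ) ⬝ᵥ
              ((hAstar.sqrt * (n₁⁻¹ • Sig₁ + n₂⁻¹ • Sig₂) * hAstar.sqrt) *ᵥ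
                (hAstar.sqrt *ᵥ μ)))))
      ∧ ((hAstar.sqrt *ᵥ μ) ⬝ᵥ (hAstar.sqrt *ᵥ μ)) /
            Real.sqrt (4 * ((hAstar.sqrt *ᵥ μ) ⬝ᵥ
              ((hAstar.sqrt * (n₁⁻¹ • Sig₁ + n₂⁻¹ • Sig₂) * hAstar.sqrt) *ᵥ
                (hAstar.sqrt *ᵥ μ))))
          = (1 / 2) * Real.sqrt (μ ⬝ᵥ ((n₁⁻¹ • Sig₁ + n₂⁻¹ • Sig₂)⁻¹ *ᵥ μ)) := by
  intro hAstar
  have hS : (n₁⁻¹ • Sig₁ + n₂⁻¹ • Sig₂).PosDef :=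
    (hSig₁.smul (inv_pos.mpr hn₁)).add (hSig₂.smul (inv_pos.mpr hn₂))
  have hmax : deltaRatio (n₁⁻¹ • Sig₁ + n₂⁻¹ • Sig₂) hAstar.sqrt μ = _ :=
    deltaRatio_eq_of_mul_self_eq_smul_inv ((isUnit_iff_isUnit_det _).mp hS.isUnit)
      hAstar.isSymm_sqrt hc hAstar.sqrt_mul_self μ
  exact ⟨fun A hA => (deltaRatio_le hS hA.posSemidef.isSymm_sqrt μ).trans_eq hmax.symm, hmax⟩

/-- Optimality of `A⋆ = c(Σ₁/n₁ + Σ₂/n₂)⁻¹`: among positive definite `A`, the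
ratio `Δ(A)/√(K₂(A))`, with `Δ(A) = ‖A^{1/2}μ‖²` and
`K₂(A) = 4 (A^{1/2}μ)ᵀ A^{1/2}(Σ₁/n₁ + Σ₂/n₂)A^{1/2}(A^{1/2}μ)`,
is maximized by `A⋆`, and the maximal value is `(1/2)√(μᵀ(Σ₁/n₁+Σ₂/n₂)⁻¹μ)`. -/
theorem ratio_maximized_by_inverse_combination
    (p : ℕ) (n₁ n₂ : ℝ) (hn₁ : 0 < n₁) (hn₂ : 0 < n₂)
    (Sig₁ Sig₂ : Matrix (Fin p) (Fin p) ℝ)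
    (hSig₁ : Sig₁.PosDef) (hSig₂ : Sig₂.PosDef)
    (μ : Fin p → ℝ) (hμ : μ ≠ 0) (c : ℝ) (hc : 0 < c) :
    ∀ hAstar : ((c • (n₁⁻¹ • Sig₁ + n₂⁻¹ • Sig₂)⁻¹ : Matrix (Fin p) (Fin p) ℝ)).PosSemidef,
      (∀ (A : Matrix (Fin p) (Fin p) ℝ) (hA : A.PosDef),
        ((hA.posSemidef.sqrt *ᵥ μ) ⬝ᵥ (hA.posSemidef.sqrt *ᵥ μ)) /
            Real.sqrt (4 * ((hA.posSemidef.sqrt *ᵥ μ) ⬝ᵥ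
              ((hA.posSemidef.sqrt * (n₁⁻¹ • Sig₁ + n₂⁻¹ • Sig₂) * hA.posSemidef.sqrt) *ᵥ
                (hA.posSemidef.sqrt *ᵥ μ))))
          ≤ ((hAstar.sqrt *ᵥ μ) ⬝ᵥ (hAstar.sqrt *ᵥ μ)) /
            Real.sqrt (4 * ((hAstar.sqrt *ᵥ μ) ⬝ᵥ
              ((hAstar.sqrt * (n₁⁻¹ • Sig₁ + n₂⁻¹ • Sig₂) * hAstar.sqrt) *ᵥ
                (hAstar.sqrt *ᵥ μ)))))
      ∧ ((hAstar.sqrt *ᵥ μ) ⬝ᵥ (hAstar.sqrt *ᵥ μ)) /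
            Real.sqrt (4 * ((hAstar.sqrt *ᵥ μ) ⬝ᵥ
              ((hAstar.sqrt * (n₁⁻¹ • Sig₁ + n₂⁻¹ • Sig₂) * hAstar.sqrt) *ᵥ
                (hAstar.sqrt *ᵥ μ))))
          = (1 / 2) * Real.sqrt (μ ⬝ᵥ ((n₁⁻¹ • Sig₁ + n₂⁻¹ • Sig₂)⁻¹ *ᵥ μ)) :=
  ratio_maximized_by_inverse_combination_general p n₁ n₂ hn₁ hn₂ Sig₁ Sig₂ hSig₁ hSig₂ μ c hc
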